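/- arXiv:1801.10266 — 7 statements merged into one kernel-verified Lean document; each statement's English description precedes it below -/
import Mathlib

section
/- Let $X$ be a compact metric space and $f : X \to X$ a continuous map. If $x \in X$ is such that the pair $(x, f(x))$ is proximal, i.e. $\liminf_{n\to\infty} d(f^n(x), f^n(f(x))) = 0$, then there exists a fixed point $p \in X$ of $f$. -/
open Filter

theorem stmt_2 {X : Type*} [MetricSpace X] [CompactSpace X] (f : X → X) (hf : Continuous f)
    (x : X)
    (hprox : Filter.liminf (fun n : ℕ => dist (f^[n] x) (f^[n] (f x))) atTop = 0) :
    ∃ p : X, f p = p := by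
  set g : ℕ → ℝ := fun n => dist (f^[n] x) (f^[n] (f x)) with hg
  have hcb : IsCoboundedUnder (· ≥ ·) atTop g := by
    exact isCoboundedUnder_ge_of_le atTop (x := Metric.diam (Set.univ : Set X))
      fun i => Metric.dist_le_diam_of_mem (isCompact_univ.isBounded) trivial trivial
  -- frequently small for each ε
  have hfreq : ∀ n : ℕ, ∃ᶠ k in atTop, g k < 1 / (n + 1) := by
    intro n
    apply frequently_lt_of_liminf_lt hcb
    rw [hprox]
    positivity
  obtain ⟨φ, hφ, hφsmall⟩ := extraction_forall_of_frequently hfreq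
  have hgφ : Tendsto (g ∘ φ) atTop (nhds 0) := by
    have h1 : Tendsto (fun n : ℕ => 1 / ((n : ℝ) + 1)) atTop (nhds 0) :=
      tendsto_one_div_add_atTop_nhds_zero_nat
    refine squeeze_zero (fun n => dist_nonneg) (fun n => le_of_lt (hφsmall n)) h1
  -- compactness: extract convergent subsequence of f^[φ n] x
  obtain ⟨p, -, ψ, hψ, hψconv⟩ :=
    isCompact_univ.tendsto_subseq (x := fun n => f^[φ n] x) (fun n => Set.mem_univ _)
  have hg2 : Tendsto (fun n => g (φ (ψ n))) atTop (nhds 0) :=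
    hgφ.comp hψ.tendsto_atTop
  have hdist : Tendsto (fun n => dist (f^[φ (ψ n)] x) (f (f^[φ (ψ n)] x))) atTop
      (nhds (dist p (f p))) := by
    have : Continuous fun y : X => dist y (f y) := by continuity
    exact (this.tendsto p).comp hψconv
  have hgeq : (fun n => g (φ (ψ n))) =
      fun n => dist (f^[φ (ψ n)] x) (f (f^[φ (ψ n)] x)) := by
    funext n
    simp only [hg]
    rw [← Function.iterate_succ_apply f, Function.iterate_succ_apply']
  rw [hgeq] at hg2
  have : dist p (f p) = 0 := tendsto_nhds_unique hdist hg2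
  exact ⟨p, (dist_eq_zero.mp this).symm⟩
end

section
/- Let $X$ be a metric space, $f : X \to X$ continuous, $n \ge 2$ and $\delta > 0$. The set $\overline{SEP}_n(f,\delta)$ of tuples $(x_1,\dots,x_n) \in X^n$ such that $\liminf_{m\to\infty} \frac{1}{m}\#\{1 \le k \le m : \min_{1\le i<j\le n} d(f^k(x_i), f^k(x_j)) \le \delta\} = 0$ is a $G_\delta$ subset of $X^n$. -/
open Filter
open scoped Classical

private noncomputable def gk {X : Type*} [MetricSpace X] (f : X → X) {n : ℕ} (k : ℕ)
    (x : Fin n → X) : ℝ :=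
  ⨅ p : {p : Fin n × Fin n // p.1 < p.2}, dist (f^[k] (x p.1.1)) (f^[k] (x p.1.2))

private noncomputable def um {X : Type*} [MetricSpace X] (f : X → X) {n : ℕ} (δ : ℝ)
    (m : ℕ) (x : Fin n → X) : ℝ :=
  (((Finset.Icc 1 m).filter (fun k => gk f k x ≤ δ)).card : ℝ) / m

private lemma um_nonneg {X : Type*} [MetricSpace X] (f : X → X) {n : ℕ} (δ : ℝ)
    (m : ℕ) (x : Fin n → X) : 0 ≤ um f δ m x := by
  unfold um; positivity

private lemma um_le_one {X : Type*} [MetricSpace X] (f : X → X) {n : ℕ} (δ : ℝ)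
    (m : ℕ) (x : Fin n → X) : um f δ m x ≤ 1 := by
  unfold um
  rcases Nat.eq_zero_or_pos m with h | h
  · simp [h]
  · rw [div_le_one (by exact_mod_cast h)]
    exact_mod_cast (Finset.card_filter_le _ _).trans (by simp)

private lemma lt_gk {X : Type*} [MetricSpace X] (f : X → X) {n : ℕ} (hn : 2 ≤ n)
    (k : ℕ) (x : Fin n → X) {δ : ℝ}
    (h : ∀ p : {p : Fin n × Fin n // p.1 < p.2},
      δ < dist (f^[k] (x p.1.1)) (f^[k] (x p.1.2))) : δ < gk f k x := by
  haveI : Nonempty {p : Fin n × Fin n // p.1 < p.2} :=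
    ⟨⟨(⟨0, by omega⟩, ⟨1, by omega⟩), by simp [Fin.lt_def]⟩⟩
  obtain ⟨p0, hp0⟩ := Finite.exists_min
    (fun p : {p : Fin n × Fin n // p.1 < p.2} =>
      dist (f^[k] (x p.1.1)) (f^[k] (x p.1.2)))
  exact lt_of_lt_of_le (h p0) (le_ciInf hp0)

private lemma isOpen_um_lt {X : Type*} [MetricSpace X] {f : X → X}
    (hf : Continuous f) {n : ℕ} (hn : 2 ≤ n) (δ : ℝ) (m : ℕ) (ε : ℝ) :
    IsOpen {x : Fin n → X | um f δ m x < ε} := by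
  rw [isOpen_iff_mem_nhds]
  intro x hx
  set F := fun y : Fin n → X => (Finset.Icc 1 m).filter (fun k => gk f k y ≤ δ) with hF
  set K := (Finset.Icc 1 m) \ F x with hK
  set V : Set (Fin n → X) := ⋂ k ∈ K, ⋂ p : {p : Fin n × Fin n // p.1 < p.2},
    {y | δ < dist (f^[k] (y p.1.1)) (f^[k] (y p.1.2))} with hV
  have hVopen : IsOpen V := by
    apply isOpen_biInter_finset
    intro k _
    apply isOpen_iInter_of_finite
    intro p
    have hc : Continuous fun y : Fin n → X =>
        dist (f^[k] (y p.1.1)) (f^[k] (y p.1.2)) :=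
      Continuous.dist ((hf.iterate k).comp (continuous_apply _))
        ((hf.iterate k).comp (continuous_apply _))
    exact isOpen_lt continuous_const hc
  have hxV : x ∈ V := by
    simp only [hV, Set.mem_iInter, Set.mem_setOf_eq]
    intro k hk p
    have hk' : ¬ gk f k x ≤ δ := by
      rw [hK, Finset.mem_sdiff, hF, Finset.mem_filter] at hk
      tauto
    have hle : gk f k x ≤ dist (f^[k] (x p.1.1)) (f^[k] (x p.1.2)) := by
      apply ciInf_le
      exact ⟨0, by rintro r ⟨q, rfl⟩; exact dist_nonneg⟩
    linarith [not_le.mp hk']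
  have hsub : V ⊆ {x | um f δ m x < ε} := by
    intro y hy
    have hcard : F y ⊆ F x := by
      intro k hk
      by_contra hknot
      have hkK : k ∈ K := by
        rw [hK, Finset.mem_sdiff]
        rw [hF, Finset.mem_filter] at hk
        exact ⟨hk.1, hknot⟩
      simp only [hV, Set.mem_iInter, Set.mem_setOf_eq] at hy
      have := lt_gk f hn k y (hy k hkK)
      rw [hF, Finset.mem_filter] at hk
      linarith [hk.2]
    have : um f δ m y ≤ um f δ m x := by
      unfold um
      rcases Nat.eq_zero_or_pos m with h | h
      · simp [h]
      · gcongr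
    exact lt_of_le_of_lt this hx
  exact Filter.mem_of_superset (hVopen.mem_nhds hxV) hsub

private lemma liminf_char {X : Type*} [MetricSpace X] (f : X → X) {n : ℕ} (δ : ℝ)
    (x : Fin n → X) :
    Filter.liminf (fun m => um f δ m x) atTop = 0 ↔
      ∀ j : ℕ, ∀ N : ℕ, ∃ m, N ≤ m ∧ um f δ m x < 1 / (j + 1) := by
  have hbd : IsBoundedUnder (· ≤ ·) atTop (fun m => um f δ m x) :=
    isBoundedUnder_of ⟨1, fun m => um_le_one f δ m x⟩
  have hcb : IsCoboundedUnder (· ≥ ·) atTop (fun m => um f δ m x) :=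
    hbd.isCoboundedUnder_ge
  have hbd' : IsBoundedUnder (· ≥ ·) atTop (fun m => um f δ m x) :=
    isBoundedUnder_of ⟨0, fun m => um_nonneg f δ m x⟩
  constructor
  · intro h j N
    by_contra hcon
    push_neg at hcon
    have : (1 : ℝ) / (j + 1) ≤ Filter.liminf (fun m => um f δ m x) atTop := by
      apply le_liminf_of_le hcb
      filter_upwards [eventually_ge_atTop N] with m hm
      exact hcon m hm
    rw [h] at this
    have : (0 : ℝ) < 1 / (j + 1) := by positivity
    linarith
  · intro h
    apply le_antisymm
    · by_contra hcon
      push_neg at hcon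
      obtain ⟨j, hj⟩ := exists_nat_one_div_lt hcon
      have : Filter.liminf (fun m => um f δ m x) atTop ≤ 1 / (j + 1) := by
        apply liminf_le_of_frequently_le _ hbd'
        rw [frequently_atTop]
        intro N
        obtain ⟨m, hm, hlt⟩ := h j N
        exact ⟨m, hm, hlt.le⟩
      linarith
    · apply le_liminf_of_le hcb
      filter_upwards with m using um_nonneg f δ m x

theorem stmt_5 {X : Type*} [MetricSpace X] (f : X → X) (hf : Continuous f)
    (n : ℕ) (hn : 2 ≤ n) (δ : ℝ) (hδ : 0 < δ) :
    IsGδ {x : Fin n → X |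
      Filter.liminf (fun m : ℕ =>
        (((Finset.Icc 1 m).filter (fun k =>
          (⨅ p : {p : Fin n × Fin n // p.1 < p.2},
            dist (f^[k] (x p.1.1)) (f^[k] (x p.1.2))) ≤ δ)).card : ℝ) / m) atTop = 0} := by
  show IsGδ {x : Fin n → X | Filter.liminf (fun m => um f δ m x) atTop = 0}
  have heq : {x : Fin n → X | Filter.liminf (fun m => um f δ m x) atTop = 0} =
      ⋂ (j : ℕ), ⋂ (N : ℕ), ⋃ m, ⋃ (_ : N ≤ m), {x : Fin n → X | um f δ m x < 1 / (j + 1)} := by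
    ext x
    simp only [Set.mem_setOf_eq, Set.mem_iInter, Set.mem_iUnion, exists_prop]
    exact liminf_char f δ x
  rw [heq]
  apply IsGδ.iInter
  intro j
  apply IsGδ.iInter
  intro N
  apply IsOpen.isGδ
  exact isOpen_iUnion fun m => isOpen_iUnion fun _ => isOpen_um_lt hf hn δ m _
end

section
/- Let $(X, f)$ be a transitive dynamical system on a metric space $X$ with a transitive point $x$ (i.e. the $\omega$-limit set of $x$ is all of $X$) and a fixed point $p$. Then every finite subset of the orbit $\{f^k(x) : k \ge 0\}$ is uniformly proximal, i.e. for every finite set $F \subseteq \mathrm{Orb}(x,f)$, $\liminf_{k\to\infty} \mathrm{diam}(f^k(F)) = 0$. -/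
open Filter

theorem stmt_6 {X : Type*} [MetricSpace X] (f : X → X) (hf : Continuous f)
    (x : X)
    (htrans : ∀ n : ℕ, closure {y : X | ∃ k, n ≤ k ∧ f^[k] x = y} = Set.univ)
    (p : X) (hp : f p = p)
    (F : Finset X) (hF : (F : Set X) ⊆ {y : X | ∃ k : ℕ, f^[k] x = y}) :
    Filter.liminf (fun k : ℕ => Metric.diam (f^[k] '' (F : Set X))) atTop = 0 := by
  -- choose exponents for each point of F
  have hFmem : ∀ y ∈ F, ∃ k : ℕ, f^[k] x = y := fun y hy => hF hy
  choose! h hh using hFmem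
  -- key: for every ε > 0, frequently diam ≤ ε
  have key : ∀ ε : ℝ, 0 < ε →
      ∃ᶠ k in atTop, Metric.diam (f^[k] '' (F : Set X)) ≤ ε := by
    intro ε hε
    have hfix : ∀ j : ℕ, f^[j] p = p := fun j => Function.iterate_fixed hp j
    -- the neighborhood U
    set U : Set X := ⋂ y ∈ F, (f^[h y]) ⁻¹' (Metric.ball p (ε / 2)) with hU
    have hUnhds : U ∈ nhds p := by
      rw [hU, Filter.biInter_finset_mem]
      intro y hy
      have : ContinuousAt (f^[h y]) p := (hf.iterate (h y)).continuousAt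
      apply this
      rw [hfix (h y)]
      exact Metric.ball_mem_nhds p (by linarith)
    obtain ⟨δ, hδpos, hδ⟩ := Metric.mem_nhds_iff.mp hUnhds
    rw [Filter.frequently_atTop]
    intro n
    -- find k ≥ n with f^[k] x ∈ ball p δ
    have hpcl : p ∈ closure {y : X | ∃ k, n ≤ k ∧ f^[k] x = y} := by
      rw [htrans n]; trivial
    rw [Metric.mem_closure_iff] at hpcl
    obtain ⟨b, ⟨k, hkn, hkb⟩, hbd⟩ := hpcl δ hδpos
    refine ⟨k, hkn, ?_⟩
    have hkU : f^[k] x ∈ U := by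
      apply hδ
      rw [Metric.mem_ball, hkb, dist_comm]
      exact hbd
    -- all points of f^[k] '' F are within ε/2 of p
    have hball : ∀ z ∈ f^[k] '' (F : Set X), dist z p ≤ ε / 2 := by
      rintro z ⟨y, hyF, rfl⟩
      have h1 : f^[k] y = f^[h y] (f^[k] x) := by
        conv_lhs => rw [← hh y hyF]
        rw [← Function.iterate_add_apply, Nat.add_comm, Function.iterate_add_apply]
      rw [hU] at hkU
      simp only [Set.mem_iInter, Set.mem_preimage, Metric.mem_ball] at hkU
      have := hkU y hyF
      rw [h1]
      linarith
    apply Metric.diam_le_of_forall_dist_le hε.le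
    intro z hz w hw
    calc dist z w ≤ dist z p + dist p w := dist_triangle z p w
      _ ≤ ε / 2 + ε / 2 := by
          have := hball z hz
          have := hball w hw
          rw [dist_comm p w]; linarith
      _ = ε := by ring
  have hcob : IsCoboundedUnder (· ≥ ·) atTop
      (fun k : ℕ => Metric.diam (f^[k] '' (F : Set X))) :=
    IsCoboundedUnder.of_frequently_le (key 1 one_pos)
  refine le_antisymm ?_ ?_
  · apply le_of_forall_pos_le_add
    intro ε hε
    have := Filter.liminf_le_of_frequently_le (key ε hε)
      (Filter.isBoundedUnder_of_eventually_ge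
        (Eventually.of_forall fun k => Metric.diam_nonneg))
    linarith
  · exact Filter.le_liminf_of_le hcob
      (Eventually.of_forall fun k => Metric.diam_nonneg)
end

section
/- Let $(X, f)$ be a dynamical system on a metric space $X$ with a transitive point $x$. Then every finite subset of the orbit $\{f^k(x) : k \ge 0\}$ is uniformly recurrent: for every finite set $F \subseteq \mathrm{Orb}(x,f)$ and every $\varepsilon > 0$ there exists $k \ge 1$ such that $d(f^k(y), y) < \varepsilon$ for all $y \in F$. -/
open Filter

theorem stmt_7 {X : Type*} [MetricSpace X] (f : X → X) (hf : Continuous f)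
    (x : X)
    (htrans : ∀ n : ℕ, closure {y : X | ∃ k, n ≤ k ∧ f^[k] x = y} = Set.univ)
    (F : Finset X) (hF : (F : Set X) ⊆ {y : X | ∃ k : ℕ, f^[k] x = y}) :
    ∀ ε > 0, ∃ k : ℕ, 1 ≤ k ∧ ∀ y ∈ F, dist (f^[k] y) y < ε := by
  intro ε hε
  rcases F.eq_empty_or_nonempty with hFe | hFne
  · exact ⟨1, le_refl 1, by simp [hFe]⟩
  have H : ∀ y ∈ F, ∃ δ, 0 < δ ∧
      ∀ k : ℕ, dist (f^[k] x) x < δ → dist (f^[k] y) y < ε := by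
    intro y hy
    obtain ⟨m, hm⟩ := hF hy
    have hc : ContinuousAt (f^[m]) x := (hf.iterate m).continuousAt
    rw [Metric.continuousAt_iff] at hc
    obtain ⟨δ, hδpos, hδ⟩ := hc ε hε
    refine ⟨δ, hδpos, fun k hk => ?_⟩
    have h1 : f^[k] y = f^[m] (f^[k] x) := by
      rw [← hm, ← Function.iterate_add_apply, Nat.add_comm,
        Function.iterate_add_apply]
    rw [h1, ← hm]
    exact hδ hk
  choose! δfun hpos hprop using H
  set δ := F.inf' hFne δfun with hδdef
  have hδpos : 0 < δ := by
    rw [hδdef, Finset.lt_inf'_iff]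
    exact fun y hy => hpos y hy
  have hx : x ∈ closure {y : X | ∃ k, 1 ≤ k ∧ f^[k] x = y} := by
    rw [htrans 1]; trivial
  rw [Metric.mem_closure_iff] at hx
  obtain ⟨z, ⟨k, hk1, hkz⟩, hzd⟩ := hx δ hδpos
  refine ⟨k, hk1, fun y hy => ?_⟩
  apply hprop y hy
  rw [hkz, dist_comm]
  exact lt_of_lt_of_le hzd (Finset.inf'_le _ hy)
end

section
/- Let $(\Sigma_2, \sigma)$ be the full shift on two symbols. For every $n \ge 2$ and all integers $0 = k_1 < k_2 < \dots < k_n$, there exists $z \in \Sigma_2$ such that the finite words $z[k_i, k_i + n - 2]$ (the blocks of $z$ of length $n-1$ starting at position $k_i$), for $i = 1, \dots, n$, are pairwise distinct. -/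
/-!
Union bound. Fix a length `N` covering all windows of length `L`. For positions `a < b`, a word
of length `N` whose windows at `a` and `b` coincide is determined by its letters outside the window
at `b` (read that window left to right, copying from position `a`), so at most a fraction
`q ^ (-L)` of the words over `q` letters are bad for the pair. With `choose n 2 < 2 ^ (n - 1)`
pairs of positions, some binary word is good for all of them.
-/

open Finset Function

theorem Nat.succ_choose_two_lt_two_pow (n : ℕ) : (n + 1).choose 2 < 2 ^ n := by
  induction n with
  | zero => simp
  | succ n ih =>
    have hpascal : (n + 2).choose 2 = (n + 1) + (n + 1).choose 2 := by
      rw [Nat.choose_succ_succ', Nat.choose_one_right]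
    have := Nat.lt_two_pow_self (n := n)
    rw [hpascal, pow_succ]
    omega

theorem Nat.choose_two_lt_two_pow_pred (n : ℕ) : n.choose 2 < 2 ^ (n - 1) := by
  cases n with
  | zero => simp
  | succ n => exact Nat.succ_choose_two_lt_two_pow n

section Windows

variable {α : Type*}

theorem eq_of_eq_off_window {z z' : ℕ → α} {a b L : ℕ} (hab : a < b)
    (hz : ∀ t < L, z (a + t) = z (b + t)) (hz' : ∀ t < L, z' (a + t) = z' (b + t))
    (h : ∀ m, m < b ∨ b + L ≤ m → z m = z' m) : z = z' := by
  funext m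
  induction m using Nat.strong_induction_on with
  | _ m ih =>
    by_cases hm : b ≤ m ∧ m < b + L
    · obtain ⟨t, rfl⟩ := Nat.exists_eq_add_of_le hm.1
      rw [← hz t (by omega), ← hz' t (by omega), ih _ (by omega)]
    · exact h m (by omega)

variable [Fintype α] [DecidableEq α] [Inhabited α]

theorem card_windowsEq_mul_pow_le {N L a b : ℕ} (hab : a < b) (hbN : b + L ≤ N) :
    #{f : Fin N → α | ∀ t < L, extend Fin.val f default (a + t) = extend Fin.val f default (b + t)}
      * Fintype.card α ^ L ≤ Fintype.card α ^ N := by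
  set W : Finset (Fin N → α) :=
    {f | ∀ t < L, extend Fin.val f default (a + t) = extend Fin.val f default (b + t)}
  have hinj : Set.InjOn
      (fun (p : (Fin N → α) × (Fin L → α)) (m : Fin N) =>
        if h : b ≤ (m : ℕ) ∧ (m : ℕ) < b + L then p.2 ⟨m - b, by omega⟩ else p.1 m)
      (W ×ˢ univ : Finset ((Fin N → α) × (Fin L → α))) := by
    rintro ⟨f, w⟩ hfw ⟨f', w'⟩ hfw' heq
    simp only [W, coe_product, coe_univ, Set.mem_prod, mem_coe, mem_filter, mem_univ,
      Set.mem_univ, true_and, and_true] at hfw hfw'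
    have hw : w = w' := by
      funext t
      simpa [show b ≤ b + t ∧ b + t < b + L by omega] using congrFun heq ⟨b + t, by omega⟩
    have hext : extend Fin.val f default = extend Fin.val f' default := by
      refine eq_of_eq_off_window hab hfw hfw' fun m hm => ?_
      by_cases hmN : m < N
      · have hfm : f ⟨m, hmN⟩ = f' ⟨m, hmN⟩ := by
          simpa [show ¬(b ≤ m ∧ m < b + L) by omega] using congrFun heq ⟨m, hmN⟩
        exact (Fin.val_injective.extend_apply f default ⟨m, hmN⟩).trans
          (hfm.trans (Fin.val_injective.extend_apply f' default ⟨m, hmN⟩).symm)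
      · have hm : ¬∃ i : Fin N, (i : ℕ) = m := by rintro ⟨i, rfl⟩; omega
        rw [extend_apply' _ _ _ hm, extend_apply' _ _ _ hm]
    rw [extend_injective Fin.val_injective default hext, hw]
  simpa [card_product] using card_le_card_of_injOn _ (fun _ _ => mem_coe.2 (mem_univ _)) hinj

theorem exists_windows_ne (S : Finset ℕ) {L : ℕ} (hS : (#S).choose 2 < Fintype.card α ^ L) :
    ∃ z : ℕ → α, ∀ a ∈ S, ∀ b ∈ S, a ≠ b → ∃ t < L, z (a + t) ≠ z (b + t) := by
  set q := Fintype.card α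
  set N := S.sup id + L
  set P : Finset (ℕ × ℕ) := {x ∈ S ×ˢ S | x.1 < x.2}
  let bad : ℕ × ℕ → Finset (Fin N → α) := fun p =>
    {f | ∀ t < L, extend Fin.val f default (p.1 + t) = extend Fin.val f default (p.2 + t)}
  have hbad : ∀ p ∈ P, #(bad p) ≤ q ^ (N - L) := by
    intro p hp
    simp only [P, mem_filter, mem_product] at hp
    have hpN : p.2 + L ≤ N := Nat.add_le_add_right (le_sup (f := id) hp.1.2) L
    refine Nat.le_of_mul_le_mul_right ((card_windowsEq_mul_pow_le hp.2 hpN).trans_eq ?_)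
      (pow_pos Fintype.card_pos L)
    rw [← pow_add, Nat.sub_add_cancel (by omega)]
  have hlt : #(P.biUnion bad) < #(univ : Finset (Fin N → α)) := calc
    #(P.biUnion bad) ≤ #P * q ^ (N - L) := card_biUnion_le_card_mul _ _ _ hbad
    _ < q ^ L * q ^ (N - L) := by
      rw [card_product_filter_lt]
      exact Nat.mul_lt_mul_of_pos_right hS (pow_pos Fintype.card_pos _)
    _ = #(univ : Finset (Fin N → α)) := by
      rw [← pow_add, card_univ, Fintype.card_fun, Fintype.card_fin, Nat.add_sub_cancel' (by omega)]
  obtain ⟨f, -, hf⟩ := exists_mem_notMem_of_card_lt_card hlt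
  have hgood : ∀ a ∈ S, ∀ b ∈ S, a < b →
      ∃ t < L, extend Fin.val f default (a + t) ≠ extend Fin.val f default (b + t) := by
    intro a ha b hb hab
    by_contra! h
    exact hf (mem_biUnion.2 ⟨(a, b), by simp [P, ha, hb, hab], by simpa [bad] using h⟩)
  refine ⟨extend Fin.val f default, fun a ha b hb hab => ?_⟩
  rcases hab.lt_or_gt with h | h
  · exact hgood a ha b hb h
  · obtain ⟨t, ht, hne⟩ := hgood b hb a ha h
    exact ⟨t, ht, hne.symm⟩

end Windows

theorem stmt_9 (n : ℕ) (k : Fin n → ℕ) (hk : StrictMono k) :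
    ∃ z : ℕ → Fin 2, ∀ i j : Fin n, i ≠ j →
      (fun t : Fin (n - 1) => z (k i + t)) ≠ (fun t : Fin (n - 1) => z (k j + t)) := by
  have hcard : (#(univ.image k)).choose 2 < Fintype.card (Fin 2) ^ (n - 1) := by
    simpa [card_image_of_injective _ hk.injective] using Nat.choose_two_lt_two_pow_pred n
  obtain ⟨z, hz⟩ := exists_windows_ne _ hcard
  refine ⟨z, fun i j hij hwin => ?_⟩
  obtain ⟨t, ht, hne⟩ :=
    hz _ (mem_image_of_mem k (mem_univ i)) _ (mem_image_of_mem k (mem_univ j)) (hk.injective.ne hij)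
  exact hne (congrFun hwin ⟨t, ht⟩)
end

section
/- Let $X$ be a compact metric space and $f : X \to X$ continuous. If $A \subseteq X$ is uniformly recurrent (for every $\varepsilon > 0$ there is $k \ge 1$ with $d(f^k(x), x) < \varepsilon$ for all $x \in A$), then for every $j \ge 1$ the restriction of $f^j$ to $A$ is injective. -/
theorem stmt_13 {X : Type*} [MetricSpace X] [CompactSpace X] (f : X → X) (hf : Continuous f)
    (A : Set X)
    (hur : ∀ ε > 0, ∃ k : ℕ, 1 ≤ k ∧ ∀ x ∈ A, dist (f^[k] x) x < ε) :
    ∀ j : ℕ, 1 ≤ j → Set.InjOn (f^[j]) A := by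
  have key : ∀ n : ℕ, ∀ ε > 0, ∃ k : ℕ, n ≤ k ∧ ∀ x ∈ A, dist (f^[k] x) x < ε := by
    intro n
    induction n with
    | zero =>
      intro ε hε
      obtain ⟨k, _, hk⟩ := hur ε hε
      exact ⟨k, Nat.zero_le k, hk⟩
    | succ n ih =>
      intro ε hε
      obtain ⟨k₁, hk₁n, hk₁⟩ := ih (ε / 2) (by linarith)
      have huc : UniformContinuous (f^[k₁]) :=
        CompactSpace.uniformContinuous_of_continuous (hf.iterate k₁)
      rw [Metric.uniformContinuous_iff] at huc
      obtain ⟨δ, hδ, hδ'⟩ := huc (ε / 2) (by linarith)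
      obtain ⟨k₂, hk₂1, hk₂⟩ := hur δ hδ
      refine ⟨k₁ + k₂, by omega, fun x hx => ?_⟩
      have h1 : dist (f^[k₁] (f^[k₂] x)) (f^[k₁] x) < ε / 2 := hδ' (hk₂ x hx)
      have h2 : dist (f^[k₁] x) x < ε / 2 := hk₁ x hx
      have heq : f^[k₁ + k₂] x = f^[k₁] (f^[k₂] x) := Function.iterate_add_apply f k₁ k₂ x
      calc dist (f^[k₁ + k₂] x) x
          ≤ dist (f^[k₁ + k₂] x) (f^[k₁] x) + dist (f^[k₁] x) x := dist_triangle _ _ _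
        _ < ε / 2 + ε / 2 := by rw [heq]; exact add_lt_add h1 h2
        _ = ε := by ring
  intro j hj x hx y hy hxy
  have hdist : ∀ ε > 0, dist x y < ε := by
    intro ε hε
    obtain ⟨k, hkj, hk⟩ := key j (ε / 2) (by linarith)
    have hkk : f^[k] x = f^[k] y := by
      have hx' : f^[k] x = f^[k - j] (f^[j] x) := by
        rw [← Function.iterate_add_apply]
        congr 1
        omega
      have hy' : f^[k] y = f^[k - j] (f^[j] y) := by
        rw [← Function.iterate_add_apply]
        congr 1
        omega
      rw [hx', hy', hxy]
    calc dist x y ≤ dist x (f^[k] x) + dist (f^[k] x) y := dist_triangle _ _ _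
      _ = dist (f^[k] x) x + dist (f^[k] y) y := by rw [dist_comm x, hkk]
      _ < ε / 2 + ε / 2 := add_lt_add (hk x hx) (hk y hy)
      _ = ε := by ring
  by_contra hne
  have : (0:ℝ) < dist x y := dist_pos.mpr hne
  exact absurd (hdist _ this) (lt_irrefl _)
end

section
/- Let $(X,f)$ be a dynamical system on a compact metric space that is exact (for every non-empty open $U \subseteq X$ there exists $n \ge 0$ with $f^n(U) = X$) and has a fixed point $p$. Then the mean proximal cell $\overline{PROX}(p) = \{y \in X : \liminf_{n\to\infty}\frac{1}{n}\sum_{k=1}^n d(f^k(y), p) = 0\}$ is dense in $X$. -/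
open Filter

theorem stmt_17 {X : Type*} [MetricSpace X] [CompactSpace X] (f : X → X) (hf : Continuous f)
    (hexact : ∀ U : Set X, IsOpen U → U.Nonempty → ∃ n : ℕ, f^[n] '' U = Set.univ)
    (p : X) (hp : f p = p) :
    Dense {y : X |
      Filter.liminf (fun n : ℕ => (∑ k ∈ Finset.Icc 1 n, dist (f^[k] y) p) / n) atTop = 0} := by
  rw [dense_iff_inter_open]
  intro U hU hUne
  obtain ⟨n, hn⟩ := hexact U hU hUne
  have hpmem : p ∈ f^[n] '' U := by rw [hn]; trivial
  obtain ⟨y, hyU, hyp⟩ := hpmem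
  refine ⟨y, hyU, ?_⟩
  have hfix : ∀ k, n ≤ k → f^[k] y = p := by
    intro k hk
    have h1 : f^[k] y = f^[k - n] (f^[n] y) := by
      rw [← Function.iterate_add_apply, Nat.sub_add_cancel hk]
    rw [h1, hyp, Function.iterate_fixed hp]
  have hS : ∀ m, n ≤ m → (∑ k ∈ Finset.Icc 1 m, dist (f^[k] y) p)
      = ∑ k ∈ Finset.Icc 1 n, dist (f^[k] y) p := by
    intro m hm
    refine (Finset.sum_subset (Finset.Icc_subset_Icc_right hm) ?_).symm
    intro x hx hx'
    simp only [Finset.mem_Icc, not_and, not_le] at hx hx'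
    rw [hfix x (by omega), dist_self]
  have htend : Tendsto (fun m : ℕ => (∑ k ∈ Finset.Icc 1 m, dist (f^[k] y) p) / m)
      atTop (nhds 0) := by
    apply Tendsto.congr' _
      (tendsto_const_div_atTop_nhds_zero_nat (∑ k ∈ Finset.Icc 1 n, dist (f^[k] y) p))
    filter_upwards [eventually_ge_atTop n] with m hm
    rw [hS m hm]
  exact htend.liminf_eq
end
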